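/- For a non-negative random variable γ_s with Gamma(s, γ̄) density f(γ) = γ^{s-1} e^{-γ/γ̄} / (γ̄^s Γ(s)) (s a positive integer, γ̄ > 0), and ψ > 0, λ ≥ 0, K a positive integer: ∫_0^∞ Q_K(√(ψγ), √λ) f(γ) dγ = (1+ψγ̄/2)^{-s} Σ_{n=0}^{∞} C(n+s-1, n) (ψγ̄/(ψγ̄+2))^n Γ(n+K, λ/2)/Γ(n+K), where Q_K(a,b) = Σ_{n=0}^{∞} ((a²/2)^n e^{-a²/2}/n!) · Γ(n+K, b²/2)/Γ(n+K). -/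

import Mathlib

noncomputable def upperGamma (a x : ℝ) : ℝ := ∫ t in Set.Ioi x, t ^ (a - 1) * Real.exp (-t)

/-!
Expanding `Q_K` in its Poisson series, each term of the average is a Poisson–Gamma mixture:
the Poisson weight of mean `ψγ/2` times the Gamma(s, γ̄) density is `c · γ^(n+s-1) e^(-bγ)` with
`b = ψ/2 + 1/γ̄`, whose integral `c · (n+s-1)! / b^(n+s)` is the negative binomial weight
`(1 + ψγ̄/2)^(-s) C(n+s-1, n) q^n`, `q = ψγ̄/(ψγ̄+2)`. The incomplete-gamma ratios lie in
`[0, 1]`, so the termwise integrals of absolute values are dominated by a convergent negative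
binomial series, which justifies exchanging sum and integral.
-/

open MeasureTheory Real Set
open scoped Nat

lemma upperGamma_nonneg {a x : ℝ} (hx : 0 ≤ x) : 0 ≤ upperGamma a x :=
  setIntegral_nonneg measurableSet_Ioi fun t ht ↦ by
    have : 0 ≤ t := hx.trans ht.le
    positivity

lemma upperGamma_le_Gamma {a x : ℝ} (ha : 0 < a) (hx : 0 ≤ x) : upperGamma a x ≤ Gamma a := by
  have hint : IntegrableOn (fun t : ℝ ↦ t ^ (a - 1) * exp (-t)) (Ioi 0) :=
    (GammaIntegral_convergent ha).congr_fun (fun t _ ↦ mul_comm _ _) measurableSet_Ioi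
  rw [Gamma_eq_integral ha,
    setIntegral_congr_fun measurableSet_Ioi fun t _ ↦ mul_comm (exp (-t)) (t ^ (a - 1))]
  refine setIntegral_mono_set hint ?_ (Ioi_subset_Ioi hx).eventuallyLE
  filter_upwards [ae_restrict_mem measurableSet_Ioi] with t (ht : 0 < t)
  positivity

lemma abs_upperGamma_div_Gamma_le_one {a x : ℝ} (ha : 0 ≤ a) (hx : 0 ≤ x) :
    |upperGamma a x / Gamma a| ≤ 1 := by
  rcases ha.eq_or_lt with rfl | ha
  · simp -- `Gamma 0 = 0`, and `x / 0 = 0`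
  rw [abs_of_nonneg (div_nonneg (upperGamma_nonneg hx) (Gamma_pos_of_pos ha).le),
    div_le_one (Gamma_pos_of_pos ha)]
  exact upperGamma_le_Gamma ha hx

lemma integrableOn_pow_mul_exp_neg_mul_Ioi (m : ℕ) {r : ℝ} (hr : 0 < r) :
    IntegrableOn (fun t : ℝ ↦ t ^ m * exp (-(r * t))) (Ioi 0) := by
  have hm : (-1 : ℝ) < m := by linarith [m.cast_nonneg (α := ℝ)]
  refine (integrableOn_rpow_mul_exp_neg_mul_rpow (p := 1) hm one_pos hr).congr_fun
    (fun t _ ↦ ?_) measurableSet_Ioi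
  simp [rpow_natCast]

lemma integral_pow_mul_exp_neg_mul_Ioi (m : ℕ) {r : ℝ} (hr : 0 < r) :
    ∫ t in Ioi 0, t ^ m * exp (-(r * t)) = m ! / r ^ (m + 1) := by
  have := integral_rpow_mul_exp_neg_mul_Ioi (a := m + 1) (by positivity) hr
  simp only [add_sub_cancel_right, rpow_natCast, Gamma_nat_eq_factorial] at this
  rw [this, ← Nat.cast_succ, rpow_natCast, one_div_pow, one_div_mul_eq_div]

noncomputable def poissonWeight (x : ℝ) (n : ℕ) : ℝ := x ^ n * exp (-x) / n !

noncomputable def gammaDensity (s : ℕ) (θ γ : ℝ) : ℝ :=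
  γ ^ (s - 1) * exp (-γ / θ) / (θ ^ s * Gamma s)

lemma poissonWeight_nonneg {x : ℝ} (hx : 0 ≤ x) (n : ℕ) : 0 ≤ poissonWeight x n := by
  unfold poissonWeight; positivity

lemma gammaDensity_nonneg (s : ℕ) {θ γ : ℝ} (hθ : 0 < θ) (hγ : 0 ≤ γ) :
    0 ≤ gammaDensity s θ γ := by
  have := Gamma_nonneg_of_nonneg (s.cast_nonneg (α := ℝ))
  unfold gammaDensity; positivity

section PoissonGammaMixture

variable {s : ℕ} {ψ θ : ℝ}

lemma poissonWeight_mul_gammaDensity (hs : 0 < s) (γ : ℝ) (n : ℕ) :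
    poissonWeight (ψ * γ / 2) n * gammaDensity s θ γ =
      (ψ / 2) ^ n / (n ! * (θ ^ s * Gamma s)) *
        (γ ^ (n + s - 1) * exp (-((ψ / 2 + 1 / θ) * γ))) := by
  have hexp : exp (-(ψ * γ / 2)) * exp (-γ / θ) = exp (-((ψ / 2 + 1 / θ) * γ)) := by
    rw [← exp_add]; ring_nf
  have hpow : γ ^ (n + s - 1) = γ ^ n * γ ^ (s - 1) := by rw [← pow_add]; congr 1; omega
  rw [← hexp, hpow]
  unfold poissonWeight gammaDensity
  ring

lemma integrableOn_poissonWeight_mul_gammaDensity (hs : 0 < s) (hψ : 0 ≤ ψ) (hθ : 0 < θ)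
    (n : ℕ) :
    IntegrableOn (fun γ ↦ poissonWeight (ψ * γ / 2) n * gammaDensity s θ γ) (Ioi 0) := by
  simp_rw [poissonWeight_mul_gammaDensity hs]
  exact (integrableOn_pow_mul_exp_neg_mul_Ioi _ (by positivity)).const_mul _

lemma integral_poissonWeight_mul_gammaDensity (hs : 0 < s) (hψ : 0 ≤ ψ) (hθ : 0 < θ) (n : ℕ) :
    ∫ γ in Ioi 0, poissonWeight (ψ * γ / 2) n * gammaDensity s θ γ =
      (1 + ψ * θ / 2) ^ (-(s : ℤ)) * ((n + s - 1).choose n * (ψ * θ / (ψ * θ + 2)) ^ n) := by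
  obtain ⟨k, rfl⟩ : ∃ k, s = k + 1 := ⟨s - 1, by omega⟩
  simp_rw [poissonWeight_mul_gammaDensity hs, Nat.add_sub_assoc hs, integral_const_mul,
    integral_pow_mul_exp_neg_mul_Ioi _ (by positivity : 0 < ψ / 2 + 1 / θ)]
  rw [Nat.cast_succ, Gamma_nat_eq_factorial, zpow_neg, zpow_natCast, add_tsub_cancel_right,
    ← Nat.add_choose_mul_factorial_mul_factorial, ← Nat.choose_symm_add,
    show ψ / 2 + 1 / θ = (ψ * θ + 2) / (2 * θ) by field_simp,
    show 1 + ψ * θ / 2 = (ψ * θ + 2) / 2 by ring]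
  push_cast
  simp only [div_pow, mul_pow]
  field_simp
  ring

lemma summable_choose_mul_geometric_mul (k : ℕ) {q M : ℝ} (hq : |q| < 1) {R : ℕ → ℝ}
    (hR : ∀ n, |R n| ≤ M) : Summable fun n ↦ ((n + k).choose n : ℝ) * q ^ n * R n := by
  refine Summable.of_norm_bounded
    ((summable_choose_mul_geometric_of_norm_lt_one k (r := |q|) (by simpa)).mul_right M)
    fun n ↦ ?_
  rw [Nat.choose_symm_add, norm_mul, norm_mul, norm_pow, Real.norm_natCast, Real.norm_eq_abs,
    Real.norm_eq_abs]
  gcongr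
  exact hR n

theorem integral_tsum_poissonWeight_mul_gammaDensity (hs : 0 < s) (hψ : 0 ≤ ψ) (hθ : 0 < θ)
    {R : ℕ → ℝ} {M : ℝ} (hR : ∀ n, |R n| ≤ M) :
    ∫ γ in Ioi 0, (∑' n, poissonWeight (ψ * γ / 2) n * R n) * gammaDensity s θ γ =
      (1 + ψ * θ / 2) ^ (-(s : ℤ)) *
        ∑' n, ((n + s - 1).choose n : ℝ) * (ψ * θ / (ψ * θ + 2)) ^ n * R n := by
  set F : ℕ → ℝ → ℝ := fun n γ ↦ poissonWeight (ψ * γ / 2) n * gammaDensity s θ γ * R n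
  have hF_int (n : ℕ) : IntegrableOn (F n) (Ioi 0) :=
    (integrableOn_poissonWeight_mul_gammaDensity hs hψ hθ n).mul_const _
  have hF_integral (n : ℕ) (c : ℝ) :
      ∫ γ in Ioi 0, poissonWeight (ψ * γ / 2) n * gammaDensity s θ γ * c =
        (1 + ψ * θ / 2) ^ (-(s : ℤ)) *
          ((n + s - 1).choose n * (ψ * θ / (ψ * θ + 2)) ^ n * c) := by
    rw [integral_mul_const, integral_poissonWeight_mul_gammaDensity hs hψ hθ]
    ring
  have hF_norm (n : ℕ) : ∫ γ in Ioi 0, ‖F n γ‖ =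
      ∫ γ in Ioi 0, poissonWeight (ψ * γ / 2) n * gammaDensity s θ γ * |R n| := by
    refine setIntegral_congr_fun measurableSet_Ioi fun γ (hγ : 0 < γ) ↦ ?_
    rw [Real.norm_eq_abs, abs_mul, abs_of_nonneg (mul_nonneg
      (poissonWeight_nonneg (by positivity) n) (gammaDensity_nonneg s hθ hγ.le))]
  have hq : |ψ * θ / (ψ * θ + 2)| < 1 := by
    rw [abs_of_nonneg (by positivity), div_lt_one (by positivity)]
    linarith
  have hF_sum : Summable fun n ↦ ∫ γ in Ioi 0, ‖F n γ‖ := by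
    simp_rw [hF_norm, hF_integral _ |_|, Nat.add_sub_assoc hs]
    exact (summable_choose_mul_geometric_mul (s - 1) hq (M := M)
      fun n ↦ by simpa using hR n).mul_left _
  calc ∫ γ in Ioi 0, (∑' n, poissonWeight (ψ * γ / 2) n * R n) * gammaDensity s θ γ
      = ∫ γ in Ioi 0, ∑' n, F n γ := by
        refine setIntegral_congr_fun measurableSet_Ioi fun γ _ ↦ ?_
        simp only [F, ← tsum_mul_right, mul_right_comm]
    _ = ∑' n, ∫ γ in Ioi 0, F n γ :=
        (integral_tsum_of_summable_integral_norm hF_int hF_sum).symm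
    _ = _ := (tsum_congr fun n ↦ hF_integral n (R n)).trans tsum_mul_left

end PoissonGammaMixture

theorem stmt10_general (s : ℕ) (hs : 0 < s) (γb ψ lam : ℝ) (hγb : 0 < γb) (hψ : 0 < ψ)
    (hlam : 0 ≤ lam) (K : ℕ) :
    (∫ γ in Set.Ioi (0 : ℝ),
        (∑' n : ℕ, ((ψ * γ / 2) ^ n * Real.exp (-(ψ * γ / 2)) / n.factorial) *
            (upperGamma (n + K) (lam / 2) / Real.Gamma (n + K))) *
          (γ ^ (s - 1) * Real.exp (-γ / γb) / (γb ^ s * Real.Gamma s)))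
      = (1 + ψ * γb / 2) ^ (-(s : ℤ)) *
          ∑' n : ℕ, ((n + s - 1).choose n : ℝ) * (ψ * γb / (ψ * γb + 2)) ^ n *
            (upperGamma (n + K) (lam / 2) / Real.Gamma (n + K)) :=
  integral_tsum_poissonWeight_mul_gammaDensity hs hψ.le hγb
    (R := fun n : ℕ ↦ upperGamma (n + K) (lam / 2) / Gamma (n + K))
    fun n ↦ abs_upperGamma_div_Gamma_le_one (by positivity) (by positivity)

/-- Averaging the generalized Marcum Q-function `Q_K(√(ψγ), √λ)` (in its
Poisson-weighted incomplete-gamma series form) over a Gamma(s, γ̄) density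
yields the closed form `Θ`. -/
theorem stmt10 (s : ℕ) (hs : 0 < s) (γb ψ lam : ℝ) (hγb : 0 < γb) (hψ : 0 < ψ)
    (hlam : 0 ≤ lam) (K : ℕ) (hK : 0 < K) :
    (∫ γ in Set.Ioi (0 : ℝ),
        (∑' n : ℕ, ((ψ * γ / 2) ^ n * Real.exp (-(ψ * γ / 2)) / n.factorial) *
            (upperGamma (n + K) (lam / 2) / Real.Gamma (n + K))) *
          (γ ^ (s - 1) * Real.exp (-γ / γb) / (γb ^ s * Real.Gamma s)))
      = (1 + ψ * γb / 2) ^ (-(s : ℤ)) *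
          ∑' n : ℕ, ((n + s - 1).choose n : ℝ) * (ψ * γb / (ψ * γb + 2)) ^ n *
            (upperGamma (n + K) (lam / 2) / Real.Gamma (n + K)) :=
  stmt10_general s hs γb ψ lam hγb hψ hlam K
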